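/- arXiv:2102.10149 — 4 statements merged into one kernel-verified Lean document; each statement's English description precedes it below -/
import Mathlib

section
/- Let δ be an expansion function and φ a reduction function on L, let p ∈ L be a proper element and b ∈ L. Then the following three statements are equivalent: (1) b is φ-δ-primary to p; (2) either (p : b) ≤ δ(p) or (p : b) = (φ(p) : b); (3) for every compact element r ∈ L, r·b ≤ p and r·b ≰ φ(p) imply r ≤ δ(p). -/
/-- The Mathlib (December 2024) definition of a compact element of a complete lattice,
restored here because Mathlib's `IsCompactElement` now has another definition. -/
def CompleteLattice.IsCompactElement {α : Type*} [CompleteLattice α] (k : α) : Prop :=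
  ∀ s : Set α, k ≤ sSup s → ∃ t : Finset α, ↑t ⊆ s ∧ k ≤ t.sup id

/-- A multiplicative lattice: a complete lattice with a commutative, associative
multiplication that distributes over arbitrary joins and whose greatest element `1`
is a multiplicative identity.  We also bundle the standing assumptions of the paper:
`L` is compactly generated, `1` is compact, and products of compact elements are
compact. -/
class MultiplicativeLattice (L : Type*) extends CompleteLattice L, CommMonoid L where
  mul_sSup : ∀ (a : L) (s : Set L), a * sSup s = ⨆ x ∈ s, a * x
  one_eq_top : (1 : L) = ⊤
  compactly_generated : ∀ x : L, ∃ s : Set L,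
    (∀ y ∈ s, CompleteLattice.IsCompactElement y) ∧ sSup s = x
  compact_one : CompleteLattice.IsCompactElement (1 : L)
  compact_mul : ∀ a b : L, CompleteLattice.IsCompactElement a →
    CompleteLattice.IsCompactElement b → CompleteLattice.IsCompactElement (a * b)

variable {L : Type*}

/-- An expansion function on `L`. -/
def IsExpansion [CompleteLattice L] (δ : L → L) : Prop :=
  (∀ a, a ≤ δ a) ∧ ∀ a b : L, a ≤ b → δ a ≤ δ b

/-- A reduction function on `L`. -/
def IsReduction [CompleteLattice L] (φ : L → L) : Prop :=
  ∀ a, φ a ≤ a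

/-- `b` is `φ`-`δ`-primary to `p`. -/
def PhiDeltaPrimaryTo [MultiplicativeLattice L] (φ δ : L → L) (b p : L) : Prop :=
  ∀ x : L, x * b ≤ p → ¬ x * b ≤ φ p → x ≤ δ p

/-- `b` is `δ`-primary to `p`. -/
def DeltaPrimaryTo [MultiplicativeLattice L] (δ : L → L) (b p : L) : Prop :=
  ∀ x : L, x * b ≤ p → x ≤ δ p

/-- `b` is `φ`-prime to `p`. -/
def PhiPrimeTo [MultiplicativeLattice L] (φ : L → L) (b p : L) : Prop :=
  ∀ x : L, x * b ≤ p → ¬ x * b ≤ φ p → x ≤ p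

/-- The radical `√q`: the join of all compact elements some positive power of which
lies below `q`.  This is the expansion function `δ₁`. -/
def mlRadical [MultiplicativeLattice L] (q : L) : L :=
  sSup {x : L | CompleteLattice.IsCompactElement x ∧ ∃ n : ℕ, 0 < n ∧ x ^ n ≤ q}

/-- The function `φ_ω(q) = ⋀_{n ≥ 1} qⁿ`. -/
def phiOmega [MultiplicativeLattice L] (q : L) : L := ⨅ n : ℕ, q ^ (n + 1)

/-- The mlResidual `(a : c)`, the join of all `x` with `x * c ≤ a`. -/
def mlResidual [MultiplicativeLattice L] (a c : L) : L := sSup {x : L | x * c ≤ a}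

/-!
Right multiplication by `b` and the residual `(· : b)` form a Galois connection, so `x * b ≤ p`
says exactly `x ≤ (p : b)`. Applied to `x = (p : b)`, primarity forces `(p : b) ≤ δ p` unless
`(p : b) * b ≤ φ p`, i.e. `(p : b) ≤ (φ p : b)`. For the compact criterion, a witness `x` with
`x * b ≰ φ p` contains a compact `y₀` with `y₀ * b ≰ φ p`; every compact `y ≤ x` then lies below
the compact element `y ⊔ y₀`, which still witnesses the hypothesis, so `x ≤ δ p`.
-/

theorem CompleteLattice.isCompactElement_iff_isCompactElement {α : Type*} [CompleteLattice α]
    (k : α) : CompleteLattice.IsCompactElement k ↔ _root_.IsCompactElement k :=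
  (isCompactElement_iff_exists_le_sSup_of_le_sSup _ k).symm

theorem CompleteLattice.IsCompactElement.sup {α : Type*} [CompleteLattice α] {x y : α}
    (hx : CompleteLattice.IsCompactElement x) (hy : CompleteLattice.IsCompactElement y) :
    CompleteLattice.IsCompactElement (x ⊔ y) := by
  classical
  simp only [isCompactElement_iff_isCompactElement] at hx hy ⊢
  simpa using isCompactElement_finsetSup {x, y} (f := id) (by simp [hx, hy])

namespace MultiplicativeLattice

variable [MultiplicativeLattice L]

instance : IsCompactlyGenerated L where
  exists_sSup_eq x := by
    simpa only [CompleteLattice.isCompactElement_iff_isCompactElement] using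
      compactly_generated x

theorem le_of_forall_isCompactElement_le {x d : L}
    (h : ∀ y : L, CompleteLattice.IsCompactElement y → y ≤ x → y ≤ d) : x ≤ d :=
  le_iff_compact_le_imp.mpr fun y hy ↦
    h y ((CompleteLattice.isCompactElement_iff_isCompactElement y).mpr hy)

theorem sSup_mul (s : Set L) (b : L) : sSup s * b = ⨆ x ∈ s, x * b := by
  simp only [mul_comm _ b, mul_sSup]

theorem sup_mul (x y b : L) : (x ⊔ y) * b = x * b ⊔ y * b := by
  rw [← sSup_pair, sSup_mul, iSup_pair]

theorem mul_right_mono (b : L) : Monotone (· * b) := fun x y hxy ↦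
  calc x * b ≤ x * b ⊔ y * b := le_sup_left
    _ = y * b := by rw [← sup_mul, sup_eq_right.mpr hxy]

theorem gc_mul_mlResidual (b : L) : GaloisConnection (· * b) (mlResidual · b) := by
  intro x p
  refine ⟨fun h ↦ le_sSup h, fun h ↦ (mul_right_mono b h).trans ?_⟩
  show sSup {x | x * b ≤ p} * b ≤ p
  rw [sSup_mul]
  exact iSup₂_le fun _ hy ↦ hy

theorem le_mlResidual_iff {x p b : L} : x ≤ mlResidual p b ↔ x * b ≤ p :=
  (gc_mul_mlResidual b x p).symm

theorem exists_isCompactElement_le_not_mul_le {x b q : L} (h : ¬x * b ≤ q) :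
    ∃ y : L, CompleteLattice.IsCompactElement y ∧ y ≤ x ∧ ¬y * b ≤ q := by
  contrapose! h
  exact le_mlResidual_iff.mp <| le_of_forall_isCompactElement_le fun y hy hyx ↦
    le_mlResidual_iff.mpr (h y hy hyx)

end MultiplicativeLattice

section

open MultiplicativeLattice

variable [MultiplicativeLattice L] {φ δ : L → L} {b p : L}

theorem phiDeltaPrimaryTo_iff_mlResidual (hφ : IsReduction φ) :
    PhiDeltaPrimaryTo φ δ b p ↔
      mlResidual p b ≤ δ p ∨ mlResidual p b = mlResidual (φ p) b := by
  constructor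
  · intro h
    refine or_iff_not_imp_left.mpr fun hres ↦
      le_antisymm ?_ ((gc_mul_mlResidual b).monotone_u (hφ p))
    by_contra hφ'
    exact hres (h _ (le_mlResidual_iff.mp le_rfl) fun hle ↦ hφ' (le_mlResidual_iff.mpr hle))
  · rintro (hδ | heq) x hxp hxφ
    · exact (le_mlResidual_iff.mpr hxp).trans hδ
    · exact absurd (le_mlResidual_iff.mp (heq ▸ le_mlResidual_iff.mpr hxp)) hxφ

theorem phiDeltaPrimaryTo_iff_forall_isCompactElement :
    PhiDeltaPrimaryTo φ δ b p ↔
      ∀ r : L, CompleteLattice.IsCompactElement r → r * b ≤ p → ¬r * b ≤ φ p → r ≤ δ p := by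
  refine ⟨fun h r _ ↦ h r, fun h x hxp hxφ ↦ ?_⟩
  obtain ⟨y₀, hy₀, hy₀x, hy₀φ⟩ := exists_isCompactElement_le_not_mul_le hxφ
  refine le_of_forall_isCompactElement_le fun y hy hyx ↦ le_sup_left.trans <|
    h (y ⊔ y₀) (hy.sup hy₀) ((mul_right_mono b (sup_le hyx hy₀x)).trans hxp) fun hle ↦ ?_
  exact hy₀φ ((mul_right_mono b le_sup_right).trans hle)

end

theorem phiDeltaPrimary_characterizations_general [MultiplicativeLattice L]
    (δ φ : L → L) (hφ : IsReduction φ)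
    (p : L) (b : L) :
    (PhiDeltaPrimaryTo φ δ b p ↔
      (mlResidual p b ≤ δ p ∨ mlResidual p b = mlResidual (φ p) b)) ∧
    (PhiDeltaPrimaryTo φ δ b p ↔
      ∀ r : L, CompleteLattice.IsCompactElement r → r * b ≤ p → ¬ r * b ≤ φ p →
        r ≤ δ p) :=
  ⟨phiDeltaPrimaryTo_iff_mlResidual hφ, phiDeltaPrimaryTo_iff_forall_isCompactElement⟩

theorem phiDeltaPrimary_characterizations [MultiplicativeLattice L]
    (δ φ : L → L) (hδ : IsExpansion δ) (hφ : IsReduction φ)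
    (p : L) (hp : p < 1) (b : L) :
    (PhiDeltaPrimaryTo φ δ b p ↔
      (mlResidual p b ≤ δ p ∨ mlResidual p b = mlResidual (φ p) b)) ∧
    (PhiDeltaPrimaryTo φ δ b p ↔
      ∀ r : L, CompleteLattice.IsCompactElement r → r * b ≤ p → ¬ r * b ≤ φ p →
        r ≤ δ p) :=
  phiDeltaPrimary_characterizations_general δ φ hφ p b
end

section
/- Let R be a commutative Noetherian local integral domain and let L be the lattice of ideals of R. Let δ be an expansion function on L, let p be a proper ideal of R and b a nonzero ideal of R. Then b is φ_n-δ-primary to p for every integer n ≥ 2 if and only if b is δ-primary to p. -/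
theorem phiN_deltaPrimary_iff_deltaPrimary_of_localNoetherianDomain
    {R : Type*} [CommRing R] [IsDomain R] [IsNoetherianRing R] [IsLocalRing R]
    (δ : Ideal R → Ideal R) (hδ1 : ∀ a : Ideal R, a ≤ δ a)
    (hδ2 : ∀ a b : Ideal R, a ≤ b → δ a ≤ δ b)
    (p : Ideal R) (hp : p ≠ ⊤) (b : Ideal R) (hb : b ≠ ⊥) :
    (∀ n : ℕ, 2 ≤ n → ∀ x : Ideal R, x * b ≤ p → ¬ x * b ≤ p ^ n → x ≤ δ p) ↔
    (∀ x : Ideal R, x * b ≤ p → x ≤ δ p) := by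
  constructor
  · intro H x hxb
    by_cases h : ∀ n : ℕ, 2 ≤ n → x * b ≤ p ^ n
    · have hall : ∀ n : ℕ, x * b ≤ p ^ n := by
        intro n
        rcases le_or_gt 2 n with hn | hn
        · exact h n hn
        · exact le_trans (h 2 le_rfl) (Ideal.pow_le_pow_right (by omega))
      have : x * b ≤ ⨅ n : ℕ, p ^ n := le_iInf hall
      rw [Ideal.iInf_pow_eq_bot_of_isLocalRing p hp] at this
      have hxb0 : x * b = ⊥ := le_bot_iff.mp this
      rcases Ideal.mul_eq_bot.mp hxb0 with hx | hb'
      · exact hx ▸ bot_le.trans (hδ1 p)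
      · exact absurd hb' hb
    · push_neg at h
      obtain ⟨n, hn2, hn⟩ := h
      exact H n hn2 x hxb hn
  · intro H n _ x hxb _
    exact H x hxb
end

section
/- Let R be a commutative Noetherian local integral domain and let L be the lattice of ideals of R. Let δ be an expansion function on L, let p be a proper ideal of R and b a nonzero ideal of R. Then b is φ_ω-δ-primary to p if and only if b is δ-primary to p. -/
theorem phiOmega_deltaPrimary_iff_deltaPrimary_of_localNoetherianDomain
    {R : Type*} [CommRing R] [IsDomain R] [IsNoetherianRing R] [IsLocalRing R]
    (δ : Ideal R → Ideal R) (hδ1 : ∀ a : Ideal R, a ≤ δ a)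
    (hδ2 : ∀ a b : Ideal R, a ≤ b → δ a ≤ δ b)
    (p : Ideal R) (hp : p ≠ ⊤) (b : Ideal R) (hb : b ≠ ⊥) :
    (∀ x : Ideal R, x * b ≤ p → ¬ x * b ≤ (⨅ n : ℕ, p ^ (n + 1)) → x ≤ δ p) ↔
    (∀ x : Ideal R, x * b ≤ p → x ≤ δ p) := by
  have hbot : (⨅ n : ℕ, p ^ (n + 1)) = ⊥ := by
    have h := Ideal.iInf_pow_eq_bot_of_isLocalRing p hp
    refine le_antisymm ?_ bot_le
    rw [← h]
    refine le_iInf fun n => ?_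
    cases n with
    | zero => simp
    | succ m => exact iInf_le (fun k => p ^ (k + 1)) m
  constructor
  · intro H x hx
    by_cases hx0 : x * b ≤ (⨅ n : ℕ, p ^ (n + 1))
    · rw [hbot, le_bot_iff, Ideal.mul_eq_bot] at hx0
      rcases hx0 with h | h
      · rw [h]; exact bot_le
      · exact absurd h hb
    · exact H x hx hx0
  · intro H x hx _
    exact H x hx
end

section
/- Let δ be an expansion function on L, let p ∈ L be a proper element and b ∈ L, and suppose b is 2-potent δ-primary to p. Then b is φ₂-δ-primary to p if and only if b is δ-primary to p. -/
variable {L : Type*}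

theorem DeltaPrimaryTo.phiDeltaPrimaryTo [MultiplicativeLattice L] {φ δ : L → L} {b p : L}
    (h : DeltaPrimaryTo δ b p) : PhiDeltaPrimaryTo φ δ b p :=
  fun x hxb _ => h x hxb

theorem PhiDeltaPrimaryTo.deltaPrimaryTo [MultiplicativeLattice L] {φ δ : L → L} {b p : L}
    (h : PhiDeltaPrimaryTo φ δ b p) (hφ : ∀ x : L, x * b ≤ φ p → x ≤ δ p) :
    DeltaPrimaryTo δ b p := by
  intro x hxb
  by_cases hφp : x * b ≤ φ p
  · exact hφ x hφp
  · exact h x hxb hφp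

theorem phiTwo_deltaPrimary_iff_deltaPrimary_of_twoPotent_general [MultiplicativeLattice L]
    (δ : L → L) (p : L) (b : L)
    (h2potent : ∀ x : L, x * b ≤ p ^ 2 → x ≤ δ p) :
    PhiDeltaPrimaryTo (fun q => q ^ 2) δ b p ↔ DeltaPrimaryTo δ b p :=
  ⟨fun h => h.deltaPrimaryTo h2potent, DeltaPrimaryTo.phiDeltaPrimaryTo⟩

theorem phiTwo_deltaPrimary_iff_deltaPrimary_of_twoPotent [MultiplicativeLattice L]
    (δ : L → L) (hδ : IsExpansion δ) (p : L) (hp : p < 1) (b : L)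
    (h2potent : ∀ x : L, x * b ≤ p ^ 2 → x ≤ δ p) :
    PhiDeltaPrimaryTo (fun q => q ^ 2) δ b p ↔ DeltaPrimaryTo δ b p :=
  phiTwo_deltaPrimary_iff_deltaPrimary_of_twoPotent_general δ p b h2potent
end
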